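/- Let X ∈ gl_n(ℝ) be the regular nilpotent Jordan block J_n. Then the centralizer of d(J_n) = diag(J_n, J_nᵀ) inside g^σ = {Z ∈ gl_{2n}(ℝ) : J Zᵀ J⁻¹ = Z} has dimension exactly n. -/
import Mathlib


open Matrix Module

noncomputable def Jmat (n : ℕ) : Matrix (Fin n ⊕ Fin n) (Fin n ⊕ Fin n) ℝ :=
  Matrix.fromBlocks 0 1 (-1) 0

noncomputable def dmat (n : ℕ) (X : Matrix (Fin n) (Fin n) ℝ) :
    Matrix (Fin n ⊕ Fin n) (Fin n ⊕ Fin n) ℝ :=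
  Matrix.fromBlocks X 0 0 Xᵀ

noncomputable def jordanBlock (n : ℕ) : Matrix (Fin n) (Fin n) ℝ :=
  Matrix.of fun i j => if (i : ℕ) + 1 = (j : ℕ) then 1 else 0

namespace Stmt14Aux

variable {n : ℕ}

lemma mulJ (M : Matrix (Fin n) (Fin n) ℝ) (i j : Fin n) :
    (M * jordanBlock n) i j = if h : 0 < (j : ℕ) then M i ⟨(j : ℕ) - 1, by omega⟩ else 0 := by
  rw [Matrix.mul_apply]
  split
  · rename_i h
    rw [Finset.sum_eq_single (⟨(j : ℕ) - 1, by omega⟩ : Fin n)]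
    · simp only [jordanBlock, Matrix.of_apply]
      rw [if_pos (by omega)]
      ring
    · intro k _ hk
      simp only [jordanBlock, Matrix.of_apply]
      rw [if_neg (by
        intro hkj
        apply hk
        apply Fin.ext
        simp only [Fin.val_mk]
        omega)]
      ring
    · intro h; exact absurd (Finset.mem_univ _) h
  · rename_i h
    apply Finset.sum_eq_zero
    intro k _
    simp only [jordanBlock, Matrix.of_apply]
    rw [if_neg (by omega)]
    ring

lemma Jmul (M : Matrix (Fin n) (Fin n) ℝ) (i j : Fin n) :
    (jordanBlock n * M) i j = if h : (i : ℕ) + 1 < n then M ⟨(i : ℕ) + 1, h⟩ j else 0 := by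
  rw [Matrix.mul_apply]
  split
  · rename_i h
    rw [Finset.sum_eq_single (⟨(i : ℕ) + 1, h⟩ : Fin n)]
    · simp only [jordanBlock, Matrix.of_apply]
      simp
    · intro k _ hk
      simp only [jordanBlock, Matrix.of_apply]
      rw [if_neg (by
        intro hik
        apply hk
        apply Fin.ext
        simp only [Fin.val_mk]
        omega)]
      ring
    · intro h'; exact absurd (Finset.mem_univ _) h'
  · rename_i h
    apply Finset.sum_eq_zero
    intro k _
    simp only [jordanBlock, Matrix.of_apply]
    rw [if_neg (by omega)]
    ring

lemma mulJT (M : Matrix (Fin n) (Fin n) ℝ) (i j : Fin n) :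
    (M * (jordanBlock n)ᵀ) i j = if h : (j : ℕ) + 1 < n then M i ⟨(j : ℕ) + 1, h⟩ else 0 := by
  have : (M * (jordanBlock n)ᵀ) i j = (jordanBlock n * Mᵀ) j i := by
    rw [← Matrix.transpose_apply (jordanBlock n * Mᵀ), Matrix.transpose_mul,
      Matrix.transpose_transpose]
  rw [this, Jmul]
  rfl

lemma JTmul (M : Matrix (Fin n) (Fin n) ℝ) (i j : Fin n) :
    ((jordanBlock n)ᵀ * M) i j = if h : 0 < (i : ℕ) then M ⟨(i : ℕ) - 1, by omega⟩ j else 0 := by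
  have : ((jordanBlock n)ᵀ * M) i j = (Mᵀ * jordanBlock n) j i := by
    rw [← Matrix.transpose_apply (Mᵀ * jordanBlock n), Matrix.transpose_mul,
      Matrix.transpose_transpose]
  rw [this, mulJ]
  rfl

/-- Toeplitz matrix parametrized by its first row. -/
def toe (n : ℕ) (a : Fin n → ℝ) : Matrix (Fin n) (Fin n) ℝ :=
  Matrix.of fun i j => if h : (i : ℕ) ≤ (j : ℕ) then a ⟨(j : ℕ) - (i : ℕ), by omega⟩ else 0

lemma toe_comm (a : Fin n → ℝ) : toe n a * jordanBlock n = jordanBlock n * toe n a := by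
  ext i j
  rw [mulJ, Jmul]
  simp only [toe, Matrix.of_apply, Fin.val_mk]
  split_ifs <;> first
    | rfl
    | (congr 1; exact Fin.ext (by simp only [Fin.val_mk]; omega))
    | (exfalso; omega)

/-- A matrix satisfying the "Hankel" recurrence which is skew-symmetric is zero. -/
lemma hankel_zero (M : Matrix (Fin n) (Fin n) ℝ)
    (hstep : ∀ (i j : Fin n) (hi : (i : ℕ) + 1 < n) (hj : (j : ℕ) + 1 < n),
      M ⟨(i : ℕ) + 1, hi⟩ j = M i ⟨(j : ℕ) + 1, hj⟩)
    (hskew : Mᵀ = -M) : M = 0 := by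
  have hank : ∀ (d : ℕ) (i j i' j' : Fin n), (i' : ℕ) = (i : ℕ) + d →
      (i : ℕ) + (j : ℕ) = (i' : ℕ) + (j' : ℕ) → M i j = M i' j' := by
    intro d
    induction d with
    | zero =>
      intro i j i' j' h1 h2
      rw [show i = i' from Fin.ext (by omega), show j = j' from Fin.ext (by omega)]
    | succ d ih =>
      intro i j i' j' h1 h2
      have hi : (i : ℕ) + 1 < n := by omega
      have hj : 0 < (j : ℕ) := by omega
      have step := hstep i ⟨(j : ℕ) - 1, by omega⟩ hi (by simp; omega)
      have : M i j = M ⟨(i : ℕ) + 1, hi⟩ ⟨(j : ℕ) - 1, by omega⟩ := by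
        rw [step]; congr 1; exact Fin.ext (by simp; omega)
      rw [this]
      exact ih _ _ _ _ (by simp; omega) (by simp; omega)
  have sym : ∀ i j : Fin n, M i j = M j i := by
    intro i j
    rcases le_total (i : ℕ) (j : ℕ) with h | h
    · exact hank ((j : ℕ) - (i : ℕ)) i j j i (by omega) (by omega)
    · exact (hank ((i : ℕ) - (j : ℕ)) j i i j (by omega) (by omega)).symm
  ext i j
  have h1 := congrFun (congrFun hskew j) i
  simp only [Matrix.transpose_apply, Matrix.neg_apply] at h1
  have h2 := sym i j
  simp only [Matrix.zero_apply]
  linarith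

/-- A matrix commuting with the Jordan block is determined by its first row. -/
lemma toeplitz (hn : 0 < n) (A : Matrix (Fin n) (Fin n) ℝ)
    (hA : A * jordanBlock n = jordanBlock n * A) :
    A = toe n (fun k => A ⟨0, hn⟩ k) := by
  have key : ∀ (m : ℕ) (hm : m < n) (j : Fin n),
      A ⟨m, hm⟩ j = if h : m ≤ (j : ℕ) then A ⟨0, hn⟩ ⟨(j : ℕ) - m, by omega⟩ else 0 := by
    intro m
    induction m with
    | zero =>
      intro hm j
      rw [dif_pos (Nat.zero_le _)]
      rfl
    | succ m ih =>
      intro hm j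
      have rel := congrFun (congrFun hA ⟨m, by omega⟩) j
      rw [mulJ, Jmul] at rel
      simp only [Fin.val_mk] at rel
      rw [dif_pos hm] at rel
      have step : A ⟨m + 1, hm⟩ j =
          if h : 0 < (j : ℕ) then A ⟨m, by omega⟩ ⟨(j : ℕ) - 1, by omega⟩ else 0 := rel.symm
      rw [step]
      split
      · rename_i hj
        rw [ih (by omega) ⟨(j : ℕ) - 1, by omega⟩]
        simp only [Fin.val_mk]
        split
        · rename_i h1
          rw [dif_pos (by omega)]
          congr 1
          exact Fin.ext (by simp; omega)
        · rename_i h1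
          rw [dif_neg (by omega)]
      · rename_i hj
        rw [dif_neg (by omega)]
  ext i j
  have := key (i : ℕ) i.isLt j
  simp only [Fin.eta] at this
  rw [this]
  rfl

/-- The embedding of the parameter space. -/
noncomputable def embL (n : ℕ) :
    (Fin n → ℝ) →ₗ[ℝ] Matrix (Fin n ⊕ Fin n) (Fin n ⊕ Fin n) ℝ where
  toFun a := Matrix.fromBlocks (toe n a) 0 0 (toe n a)ᵀ
  map_add' a b := by
    have h : toe n (a + b) = toe n a + toe n b := by
      ext i j
      simp only [toe, Matrix.of_apply, Matrix.add_apply]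
      split <;> simp
    simp only [h, Matrix.transpose_add, Matrix.fromBlocks_add, add_zero]
  map_smul' c a := by
    have h : toe n (c • a) = c • toe n a := by
      ext i j
      simp only [toe, Matrix.of_apply, Matrix.smul_apply, smul_eq_mul]
      split <;> simp
    simp only [h, Matrix.transpose_smul, Matrix.fromBlocks_smul, smul_zero, RingHom.id_apply]

lemma embL_inj : Function.Injective (embL n) := by
  intro a b hab
  funext k
  have h0 : (0 : ℕ) < n := lt_of_le_of_lt (Nat.zero_le _) k.isLt
  have := congrFun (congrFun hab (Sum.inl ⟨0, h0⟩)) (Sum.inl k)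
  simp only [embL, LinearMap.coe_mk, AddHom.coe_mk, Matrix.fromBlocks_apply₁₁, toe,
    Matrix.of_apply] at this
  rw [dif_pos (Nat.zero_le _), dif_pos (Nat.zero_le _)] at this
  simpa using this

lemma Jmat_inv : (Jmat n)⁻¹ = Matrix.fromBlocks 0 (-1) 1 0 := by
  apply Matrix.inv_eq_right_inv
  rw [Jmat, Matrix.fromBlocks_multiply]
  simp [Matrix.fromBlocks_one]

end Stmt14Aux

open Stmt14Aux in
/-- The centralizer of d(J_n) inside g^σ has dimension exactly n. -/
theorem stmt14 (n : ℕ) (S : Submodule ℝ (Matrix (Fin n ⊕ Fin n) (Fin n ⊕ Fin n) ℝ))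
    (hS : (S : Set (Matrix (Fin n ⊕ Fin n) (Fin n ⊕ Fin n) ℝ)) =
      {Z | Jmat n * Zᵀ * (Jmat n)⁻¹ = Z ∧
           Z * dmat n (jordanBlock n) = dmat n (jordanBlock n) * Z}) :
    finrank ℝ S = n := by
  have hrange : LinearMap.range (embL n) = S := by
    apply le_antisymm
    · rintro _ ⟨a, rfl⟩
      have hmem : embL n a ∈ (S : Set _) := by
        rw [hS]
        constructor
        · show Jmat n * (embL n a)ᵀ * (Jmat n)⁻¹ = embL n a
          rw [Jmat_inv]
          show Jmat n * (Matrix.fromBlocks (toe n a) 0 0 (toe n a)ᵀ)ᵀ *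
            Matrix.fromBlocks 0 (-1) 1 0 = Matrix.fromBlocks (toe n a) 0 0 (toe n a)ᵀ
          rw [Matrix.fromBlocks_transpose, Jmat, Matrix.fromBlocks_multiply,
            Matrix.fromBlocks_multiply]
          simp
        · show embL n a * dmat n (jordanBlock n) = dmat n (jordanBlock n) * embL n a
          show Matrix.fromBlocks (toe n a) 0 0 (toe n a)ᵀ * dmat n (jordanBlock n) =
            dmat n (jordanBlock n) * Matrix.fromBlocks (toe n a) 0 0 (toe n a)ᵀ
          rw [dmat, Matrix.fromBlocks_multiply, Matrix.fromBlocks_multiply]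
          have h1 := toe_comm a
          have h2 : (toe n a)ᵀ * (jordanBlock n)ᵀ = (jordanBlock n)ᵀ * (toe n a)ᵀ := by
            rw [← Matrix.transpose_mul, ← Matrix.transpose_mul, h1]
          simp [h1, h2]
      exact hmem
    · intro Z hZ
      have hmem : Z ∈ (S : Set _) := hZ
      rw [hS] at hmem
      obtain ⟨hσ, hc⟩ := hmem
      rcases eq_or_ne n 0 with hn0 | hne
      · subst hn0
        refine ⟨0, ?_⟩
        ext i j
        cases i with
        | inl i => exact i.elim0
        | inr i => exact i.elim0
      have hn : 0 < n := Nat.pos_of_ne_zero hne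
      -- block decomposition
      set A := Z.toBlocks₁₁ with hA
      set B := Z.toBlocks₁₂ with hB
      set C := Z.toBlocks₂₁ with hC
      set D := Z.toBlocks₂₂ with hD
      have hZblocks : Z = Matrix.fromBlocks A B C D := (Matrix.fromBlocks_toBlocks Z).symm
      rw [Jmat_inv, hZblocks, Jmat, Matrix.fromBlocks_transpose, Matrix.fromBlocks_multiply,
        Matrix.fromBlocks_multiply] at hσ
      simp only [Matrix.zero_mul, Matrix.mul_zero, Matrix.mul_one, Matrix.one_mul,
        Matrix.mul_neg, Matrix.neg_mul, zero_add, add_zero, neg_neg, mul_neg, neg_mul,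
        mul_one, one_mul, mul_zero, zero_mul] at hσ
      rw [Matrix.fromBlocks_inj] at hσ
      obtain ⟨hσ1, hσ2, hσ3, hσ4⟩ := hσ
      rw [hZblocks, dmat, Matrix.fromBlocks_multiply, Matrix.fromBlocks_multiply] at hc
      simp only [Matrix.zero_mul, Matrix.mul_zero, zero_add, add_zero] at hc
      rw [Matrix.fromBlocks_inj] at hc
      obtain ⟨hc1, hc2, hc3, hc4⟩ := hc
      -- B = 0
      have hB0 : B = 0 := by
        apply hankel_zero
        · intro i j hi hj
          have rel := congrFun (congrFun hc2 i) j
          rw [mulJT, Jmul] at rel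
          rw [dif_pos hj, dif_pos hi] at rel
          exact rel.symm
        · exact (neg_neg Bᵀ).symm.trans (congrArg Neg.neg hσ2)
      -- C = 0
      have hC0 : C = 0 := by
        apply hankel_zero
        · intro i j hi hj
          have rel := congrFun (congrFun hc3 ⟨(i : ℕ) + 1, hi⟩) ⟨(j : ℕ) + 1, hj⟩
          rw [mulJ, JTmul] at rel
          simp only [Fin.val_mk] at rel
          rw [dif_pos (by omega), dif_pos (by omega)] at rel
          have e1 : (⟨(i : ℕ) + 1 - 1, by omega⟩ : Fin n) = i := Fin.ext (by simp)
          have e2 : (⟨(j : ℕ) + 1 - 1, by omega⟩ : Fin n) = j := Fin.ext (by simp)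
          rw [e1, e2] at rel
          exact rel
        · exact (neg_neg Cᵀ).symm.trans (congrArg Neg.neg hσ3)
      -- A is Toeplitz
      have hAtoe : A = toe n (fun k => A ⟨0, hn⟩ k) := toeplitz hn A hc1
      refine ⟨fun k => A ⟨0, hn⟩ k, ?_⟩
      show Matrix.fromBlocks (toe n fun k => A ⟨0, hn⟩ k) 0 0
        (toe n fun k => A ⟨0, hn⟩ k)ᵀ = Z
      rw [hZblocks, ← hAtoe, hB0, hC0, ← hσ4]
  rw [← hrange]
  rw [LinearMap.finrank_range_of_inj embL_inj]
  simp
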